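/- arXiv:2511.01263 — 2 statements merged into one kernel-verified Lean document; each statement's English description precedes it below -/
import Mathlib

section
/- Let n ≥ 1 and d ≥ 1 be integers, and let d₁, …, dₙ be real numbers with dᵢ ≥ 1 for every i and with d_j > 1 for at least one index j. Then the (finite) cardinality of the set {(m₁, …, mₙ) ∈ ℕⁿ : m₁d₁ + ⋯ + mₙdₙ ≤ d} is at most C(n+d, n) − C(n+d−2, d−1), where C(·,·) denotes the binomial coefficient. -/
/-!
Since every `D i ≥ 1`, the set lies in the simplex `{m | ∑ mᵢ ≤ d}`, which has
`C(n+d, n)` points by stars and bars. Since `D j > 1`, it misses every `m` with `∑ mᵢ = d` and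
`m j ≥ 1`; these are the translates by `Pi.single j 1` of the `C(n+d-2, d-1)` tuples with
`∑ mᵢ = d - 1`.
-/

section StarsAndBars

variable {ι : Type*} [Fintype ι] [DecidableEq ι]

theorem ncard_sum_eq (k : ℕ) :
    {m : ι → ℕ | ∑ i, m i = k}.ncard = (Fintype.card ι + k - 1).choose k := by
  rw [← Nat.card_coe_set_eq, Set.coe_ofPred, ← Nat.card_congr (Sym.equivNatSumOfFintype ι k),
    Nat.card_eq_fintype_card, Sym.card_sym_eq_choose]

def sumLeEquivOption (k : ℕ) :
    {m : ι → ℕ // ∑ i, m i ≤ k} ≃ {m : Option ι → ℕ // ∑ i, m i = k} where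
  toFun m := ⟨fun o => o.elim (k - ∑ i, m.1 i) m.1, by
    rw [Fintype.sum_option]; have := m.2; simp only [Option.elim]; omega⟩
  invFun m := ⟨fun i => m.1 (some i), by
    have := m.2; rw [Fintype.sum_option] at this; dsimp only; omega⟩
  left_inv m := rfl
  right_inv m := by
    obtain ⟨m, hm⟩ := m
    rw [Fintype.sum_option] at hm
    ext (_ | i)
    · simp only [Option.elim]; omega
    · rfl

theorem ncard_sum_le (k : ℕ) :
    {m : ι → ℕ | ∑ i, m i ≤ k}.ncard = (Fintype.card ι + k).choose k := by
  rw [← Nat.card_coe_set_eq, Set.coe_ofPred, Nat.card_congr (sumLeEquivOption k),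
    ← Set.coe_ofPred, Nat.card_coe_set_eq, ncard_sum_eq, Fintype.card_option]
  congr 1
  omega

end StarsAndBars

section Weighted

variable {ι : Type*} [Fintype ι] {D : ι → ℝ}

theorem sum_le_sum_mul_of_one_le (hD : ∀ i, 1 ≤ D i) (m : ι → ℕ) :
    ((∑ i, m i : ℕ) : ℝ) ≤ ∑ i, (m i : ℝ) * D i := by
  push_cast
  exact Finset.sum_le_sum fun i _ => le_mul_of_one_le_right (Nat.cast_nonneg _) (hD i)

theorem eq_zero_of_sum_mul_le_sum (hD : ∀ i, 1 ≤ D i) {j : ι} (hj : 1 < D j) {m : ι → ℕ}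
    (h : ∑ i, (m i : ℝ) * D i ≤ ((∑ i, m i : ℕ) : ℝ)) : m j = 0 := by
  have hexcess : (m j : ℝ) * (D j - 1) ≤ ∑ i, (m i : ℝ) * (D i - 1) :=
    Finset.single_le_sum (f := fun i => (m i : ℝ) * (D i - 1))
      (fun i _ => mul_nonneg (Nat.cast_nonneg _) (sub_nonneg.2 (hD i))) (Finset.mem_univ j)
  have hsplit : ∑ i, (m i : ℝ) * (D i - 1) = ∑ i, (m i : ℝ) * D i - ((∑ i, m i : ℕ) : ℝ) := by
    push_cast
    rw [← Finset.sum_sub_distrib]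
    exact Finset.sum_congr rfl fun i _ => by ring
  have : (m j : ℝ) * (D j - 1) ≤ 0 := by linarith
  exact Nat.le_zero.1 (by exact_mod_cast nonpos_of_mul_nonpos_left this (sub_pos.2 hj))

end Weighted

theorem stmt_0_general (n d : ℕ) (hd : 1 ≤ d) (D : Fin n → ℝ)
    (hD : ∀ i, 1 ≤ D i) (hj : ∃ j, 1 < D j) :
    {m : Fin n → ℕ | ∑ i, (m i : ℝ) * D i ≤ (d : ℝ)}.Finite ∧
    {m : Fin n → ℕ | ∑ i, (m i : ℝ) * D i ≤ (d : ℝ)}.ncard ≤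
      (n + d).choose n - (n + d - 2).choose (d - 1) := by
  obtain ⟨j, hj⟩ := hj
  set S := {m : Fin n → ℕ | ∑ i, (m i : ℝ) * D i ≤ (d : ℝ)}
  set T := {m : Fin n → ℕ | ∑ i, m i ≤ d}
  set E := (· + Pi.single j 1) '' {m : Fin n → ℕ | ∑ i, m i = d - 1}
  have hT : T.Finite := Set.finite_of_ncard_ne_zero <| by
    rw [ncard_sum_le]; exact (Nat.choose_pos (by omega)).ne'
  have hE_sum : ∀ m ∈ E, ∑ i, m i = d := by
    rintro _ ⟨m, hm, rfl⟩
    simp only [Set.mem_ofPred_eq] at hm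
    simp only [Pi.add_apply, Finset.sum_add_distrib, hm, Finset.sum_pi_single', Finset.mem_univ,
      if_true]
    omega
  have hET : E ⊆ T := fun m hm => (hE_sum m hm).le
  have hST : S ⊆ T \ E := by
    intro m hm
    have hm' : ((∑ i, m i : ℕ) : ℝ) ≤ d := (sum_le_sum_mul_of_one_le hD m).trans hm
    refine ⟨by exact_mod_cast hm', ?_⟩
    intro hmE
    obtain ⟨m', -, rfl⟩ := id hmE
    have := eq_zero_of_sum_mul_le_sum hD hj (m := m' + Pi.single j 1) (by rwa [hE_sum _ hmE])
    simp at this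
  refine ⟨hT.sdiff.subset hST, ?_⟩
  calc S.ncard ≤ (T \ E).ncard := Set.ncard_le_ncard hST hT.sdiff
    _ = T.ncard - E.ncard := Set.ncard_sdiff hET (hT.subset hET)
    _ = (n + d).choose n - (n + d - 2).choose (d - 1) := by
      rw [ncard_sum_le, Set.ncard_image_of_injective _ (add_left_injective _), ncard_sum_eq,
        Fintype.card_fin, Nat.choose_symm_add, show n + (d - 1) - 1 = n + d - 2 by omega]

/-- For integers `n ≥ 1`, `d ≥ 1` and real numbers `D i ≥ 1` with `D j > 1`
for at least one `j`, the set `{m ∈ ℕⁿ : ∑ mᵢ Dᵢ ≤ d}` is finite and its cardinality is at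
most `C(n+d, n) − C(n+d−2, d−1)`. -/
theorem stmt_0 (n d : ℕ) (hn : 1 ≤ n) (hd : 1 ≤ d) (D : Fin n → ℝ)
    (hD : ∀ i, 1 ≤ D i) (hj : ∃ j, 1 < D j) :
    {m : Fin n → ℕ | ∑ i, (m i : ℝ) * D i ≤ (d : ℝ)}.Finite ∧
    {m : Fin n → ℕ | ∑ i, (m i : ℝ) * D i ≤ (d : ℝ)}.ncard ≤
      (n + d).choose n - (n + d - 2).choose (d - 1) :=
  stmt_0_general n d hd D hD hj
end

section
/- Fix an integer n ≥ 1 and real weights w₁, …, wₙ > 0, and let r be a weighted radial function for these weights. Then the link {z ∈ ℂⁿ \ {0} : r(z) = 1}, with its subspace topology, is homeomorphic to the Euclidean unit sphere S^{2n−1} ⊂ ℂⁿ. -/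
/-!
Because `r` is positive and homogeneous of degree one, `z ↦ r(z)⁻¹ • z` maps every weighted
orbit onto its single point with `r = 1`. Each orbit also meets the unit sphere exactly once,
since `t ↦ ‖t • z‖` increases strictly from `0` to `∞` when all weights are positive. Hence this
map restricts to a continuous bijection from the compact sphere onto the Hausdorff link, which is
therefore a homeomorphism.
-/

open Filter Set Function

/-- The weighted scaling action of `t ∈ (0,∞)` on `ℂⁿ` with real weights `w`:
`(t • z)ᵢ = t^{wᵢ} zᵢ`, where `t^{wᵢ}` is the real power. -/
noncomputable def wsmul {n : ℕ} (w : Fin n → ℝ) (t : ℝ) (z : EuclideanSpace ℂ (Fin n)) :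
    EuclideanSpace ℂ (Fin n) :=
  WithLp.toLp 2 (fun i => ((t ^ (w i) : ℝ) : ℂ) * z i)

namespace WeightedScaling

variable {n : ℕ} {w : Fin n → ℝ} {r : EuclideanSpace ℂ (Fin n) → ℝ}

@[simp]
lemma wsmul_apply (t : ℝ) (z : EuclideanSpace ℂ (Fin n)) (i : Fin n) :
    wsmul w t z i = ((t ^ w i : ℝ) : ℂ) * z i :=
  rfl

lemma wsmul_one (z : EuclideanSpace ℂ (Fin n)) : wsmul w 1 z = z := by
  ext i; simp

lemma wsmul_zero (t : ℝ) : wsmul w t (0 : EuclideanSpace ℂ (Fin n)) = 0 := by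
  ext i; simp

lemma wsmul_zero_left (hw : ∀ i, w i ≠ 0) (z : EuclideanSpace ℂ (Fin n)) : wsmul w 0 z = 0 := by
  ext i; simp [Real.zero_rpow (hw i)]

lemma wsmul_wsmul {s t : ℝ} (hs : 0 ≤ s) (ht : 0 ≤ t) (z : EuclideanSpace ℂ (Fin n)) :
    wsmul w s (wsmul w t z) = wsmul w (s * t) z := by
  ext i
  simp only [wsmul_apply, Real.mul_rpow hs ht]
  push_cast
  ring

lemma wsmul_ne_zero {t : ℝ} (ht : 0 < t) {z : EuclideanSpace ℂ (Fin n)} (hz : z ≠ 0) :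
    wsmul w t z ≠ 0 := by
  intro h
  have := congrArg (wsmul w t⁻¹) h
  rw [wsmul_wsmul (inv_pos.2 ht).le ht.le, inv_mul_cancel₀ ht.ne', wsmul_one, wsmul_zero] at this
  exact hz this

lemma norm_wsmul_apply {t : ℝ} (ht : 0 ≤ t) (z : EuclideanSpace ℂ (Fin n)) (i : Fin n) :
    ‖wsmul w t z i‖ = t ^ w i * ‖z i‖ := by
  rw [wsmul_apply, norm_mul, Complex.norm_real, Real.norm_of_nonneg (by positivity)]

lemma continuous_wsmul (hw : ∀ i, 0 ≤ w i) :
    Continuous fun p : ℝ × EuclideanSpace ℂ (Fin n) => wsmul w p.1 p.2 := by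
  refine (PiLp.continuous_toLp 2 _).comp (continuous_pi fun i => ?_)
  exact (Complex.continuous_ofReal.comp
    ((Real.continuous_rpow_const (hw i)).comp continuous_fst)).mul
      ((PiLp.continuous_apply 2 _ i).comp continuous_snd)

lemma exists_apply_ne_zero {z : EuclideanSpace ℂ (Fin n)} (hz : z ≠ 0) : ∃ i, z i ≠ 0 := by
  by_contra! h
  exact hz (by ext i; simp [h])

lemma strictMonoOn_norm_wsmul (hw : ∀ i, 0 < w i) {z : EuclideanSpace ℂ (Fin n)} (hz : z ≠ 0) :
    StrictMonoOn (fun t => ‖wsmul w t z‖) (Ici 0) := by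
  intro s (hs : 0 ≤ s) t (ht : 0 ≤ t) hst
  obtain ⟨j, hj⟩ := exists_apply_ne_zero hz
  simp only [EuclideanSpace.norm_eq, norm_wsmul_apply hs, norm_wsmul_apply ht]
  refine Real.sqrt_lt_sqrt (by positivity) (Finset.sum_lt_sum (fun i _ => ?_) ⟨j, by simp, ?_⟩)
  · have := hw i
    gcongr
  · have := Real.rpow_lt_rpow hs hst (hw j)
    gcongr

lemma tendsto_norm_wsmul_atTop (hw : ∀ i, 0 < w i) {z : EuclideanSpace ℂ (Fin n)} (hz : z ≠ 0) :
    Tendsto (fun t => ‖wsmul w t z‖) atTop atTop := by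
  obtain ⟨j, hj⟩ := exists_apply_ne_zero hz
  refine tendsto_atTop_mono' atTop ?_
    ((tendsto_rpow_atTop (hw j)).atTop_mul_const (norm_pos_iff.2 hj))
  filter_upwards [eventually_ge_atTop 0] with t ht
  rw [← norm_wsmul_apply ht]
  exact PiLp.norm_apply_le _ j

lemma exists_norm_wsmul_eq (hw : ∀ i, 0 < w i) {z : EuclideanSpace ℂ (Fin n)} (hz : z ≠ 0)
    {c : ℝ} (hc : 0 < c) : ∃ t, 0 < t ∧ ‖wsmul w t z‖ = c := by
  have hcont : Continuous fun t => ‖wsmul w t z‖ :=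
    ((continuous_wsmul fun i => (hw i).le).comp (continuous_id.prodMk continuous_const)).norm
  have h0 : ‖wsmul w 0 z‖ = 0 := by rw [wsmul_zero_left fun i => (hw i).ne', norm_zero]
  obtain ⟨t, ht, htc⟩ := intermediate_value_Ici hcont.continuousOn
    (tendsto_norm_wsmul_atTop hw hz) (show c ∈ Ici ‖wsmul w 0 z‖ by rw [h0]; exact hc.le)
  refine ⟨t, lt_of_le_of_ne ht ?_, htc⟩
  rintro rfl
  exact hc.ne' (htc ▸ h0)

lemma eq_one_of_norm_wsmul_eq (hw : ∀ i, 0 < w i) {z : EuclideanSpace ℂ (Fin n)} (hz : z ≠ 0)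
    {t : ℝ} (ht : 0 < t) (h : ‖wsmul w t z‖ = ‖z‖) : t = 1 :=
  (strictMonoOn_norm_wsmul hw hz).injOn ht.le (mem_Ici.2 zero_le_one)
    (by simp only [h, wsmul_one])

noncomputable def linkProj (w : Fin n → ℝ) (r : EuclideanSpace ℂ (Fin n) → ℝ)
    (z : EuclideanSpace ℂ (Fin n)) : EuclideanSpace ℂ (Fin n) :=
  wsmul w (r z)⁻¹ z

lemma linkProj_ne_zero (hr_pos : ∀ z, z ≠ 0 → 0 < r z) {z : EuclideanSpace ℂ (Fin n)}
    (hz : z ≠ 0) : linkProj w r z ≠ 0 :=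
  wsmul_ne_zero (inv_pos.2 (hr_pos z hz)) hz

lemma radial_linkProj (hr_pos : ∀ z, z ≠ 0 → 0 < r z)
    (hr_hom : ∀ t : ℝ, 0 < t → ∀ z, z ≠ 0 → r (wsmul w t z) = t * r z)
    {z : EuclideanSpace ℂ (Fin n)} (hz : z ≠ 0) : r (linkProj w r z) = 1 := by
  have hrz := hr_pos z hz
  rw [linkProj, hr_hom _ (inv_pos.2 hrz) _ hz, inv_mul_cancel₀ hrz.ne']

lemma linkProj_of_radial_eq_one {z : EuclideanSpace ℂ (Fin n)} (hz : r z = 1) :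
    linkProj w r z = z := by
  rw [linkProj, hz, inv_one, wsmul_one]

lemma linkProj_wsmul (hr_pos : ∀ z, z ≠ 0 → 0 < r z)
    (hr_hom : ∀ t : ℝ, 0 < t → ∀ z, z ≠ 0 → r (wsmul w t z) = t * r z)
    {t : ℝ} (ht : 0 < t) {z : EuclideanSpace ℂ (Fin n)} (hz : z ≠ 0) :
    linkProj w r (wsmul w t z) = linkProj w r z := by
  have hrz := hr_pos z hz
  rw [linkProj, linkProj, hr_hom t ht z hz, wsmul_wsmul (by positivity) ht.le, mul_inv_rev,
    inv_mul_cancel_right₀ ht.ne']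

lemma exists_wsmul_eq_of_linkProj_eq (hr_pos : ∀ z, z ≠ 0 → 0 < r z)
    {z₁ z₂ : EuclideanSpace ℂ (Fin n)} (hz₁ : z₁ ≠ 0) (hz₂ : z₂ ≠ 0)
    (h : linkProj w r z₁ = linkProj w r z₂) : ∃ t, 0 < t ∧ z₁ = wsmul w t z₂ := by
  have hr₁ := hr_pos z₁ hz₁
  have hr₂ := hr_pos z₂ hz₂
  refine ⟨r z₁ * (r z₂)⁻¹, by positivity, ?_⟩
  have := congrArg (wsmul w (r z₁)) h
  rwa [linkProj, linkProj, wsmul_wsmul hr₁.le (inv_pos.2 hr₁).le, mul_inv_cancel₀ hr₁.ne',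
    wsmul_one, wsmul_wsmul hr₁.le (inv_pos.2 hr₂).le] at this

lemma continuousOn_linkProj (hw : ∀ i, 0 ≤ w i)
    (hr_cont : ContinuousOn r {0}ᶜ) (hr_pos : ∀ z, z ≠ 0 → 0 < r z) :
    ContinuousOn (linkProj w r) {0}ᶜ :=
  (continuous_wsmul hw).comp_continuousOn
    ((hr_cont.inv₀ fun z hz => (hr_pos z hz).ne').prodMk continuousOn_id)

end WeightedScaling

open WeightedScaling in
theorem stmt_8_general (n : ℕ) (w : Fin n → ℝ) (hw : ∀ i, 0 < w i)
    (r : EuclideanSpace ℂ (Fin n) → ℝ)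
    (hr_cont : ContinuousOn r ({0}ᶜ : Set (EuclideanSpace ℂ (Fin n))))
    (hr_pos : ∀ z : EuclideanSpace ℂ (Fin n), z ≠ 0 → 0 < r z)
    (hr_hom : ∀ t : ℝ, 0 < t → ∀ z : EuclideanSpace ℂ (Fin n), z ≠ 0 →
      r (wsmul w t z) = t * r z) :
    Nonempty ({z : EuclideanSpace ℂ (Fin n) // z ≠ 0 ∧ r z = 1} ≃ₜ
      (Metric.sphere (0 : EuclideanSpace ℂ (Fin n)) 1)) := by
  have hsphere (z : Metric.sphere (0 : EuclideanSpace ℂ (Fin n)) 1) :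
      (z : EuclideanSpace ℂ (Fin n)) ≠ 0 :=
    ne_zero_of_mem_unit_sphere z
  let f (z : Metric.sphere (0 : EuclideanSpace ℂ (Fin n)) 1) :
      {z : EuclideanSpace ℂ (Fin n) // z ≠ 0 ∧ r z = 1} :=
    ⟨linkProj w r z, linkProj_ne_zero hr_pos (hsphere z),
      radial_linkProj hr_pos hr_hom (hsphere z)⟩
  have hf_cont : Continuous f :=
    ((continuousOn_linkProj (fun i => (hw i).le) hr_cont hr_pos).comp_continuous
      continuous_subtype_val hsphere).subtype_mk _
  have hf_inj : Injective f := by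
    intro z₁ z₂ h
    obtain ⟨t, ht, hz⟩ := exists_wsmul_eq_of_linkProj_eq hr_pos (hsphere z₁) (hsphere z₂)
      (congrArg Subtype.val h)
    have ht_one : t = 1 := eq_one_of_norm_wsmul_eq hw (hsphere z₂) ht
      (by rw [← hz, norm_eq_of_mem_sphere, norm_eq_of_mem_sphere])
    exact Subtype.ext (by rw [hz, ht_one, wsmul_one])
  have hf_surj : Surjective f := by
    rintro ⟨z, hz, hrz⟩
    obtain ⟨t, ht, hnorm⟩ := exists_norm_wsmul_eq hw hz one_pos
    exact ⟨⟨wsmul w t z, mem_sphere_zero_iff_norm.2 hnorm⟩,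
      Subtype.ext ((linkProj_wsmul hr_pos hr_hom ht hz).trans (linkProj_of_radial_eq_one hrz))⟩
  exact ⟨(hf_cont.homeoOfEquivCompactToT2 (f := Equiv.ofBijective f ⟨hf_inj, hf_surj⟩)).symm⟩

/-- For a weighted radial function `r` (continuous on `ℂⁿ \ {0}`, positive,
and homogeneous of degree 1 for the weighted scaling action), the link
`{z ∈ ℂⁿ \ {0} : r(z) = 1}`, with its subspace topology, is homeomorphic to the Euclidean
unit sphere `S^{2n−1} ⊂ ℂⁿ`. -/
theorem stmt_8 (n : ℕ) (hn : 1 ≤ n) (w : Fin n → ℝ) (hw : ∀ i, 0 < w i)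
    (r : EuclideanSpace ℂ (Fin n) → ℝ)
    (hr_cont : ContinuousOn r ({0}ᶜ : Set (EuclideanSpace ℂ (Fin n))))
    (hr_pos : ∀ z : EuclideanSpace ℂ (Fin n), z ≠ 0 → 0 < r z)
    (hr_hom : ∀ t : ℝ, 0 < t → ∀ z : EuclideanSpace ℂ (Fin n), z ≠ 0 →
      r (wsmul w t z) = t * r z) :
    Nonempty ({z : EuclideanSpace ℂ (Fin n) // z ≠ 0 ∧ r z = 1} ≃ₜ
      (Metric.sphere (0 : EuclideanSpace ℂ (Fin n)) 1)) :=
  stmt_8_general n w hw r hr_cont hr_pos hr_hom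
end
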